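/- arXiv:1612.07491 — 2 statements merged into one kernel-verified Lean document; each statement's English description precedes it below -/
import Mathlib

section
/- Let P₁, P₂ : F^t → F be two distinct polynomials of total degree at most d, and let 0 ≤ r ≤ t. Then the probability, over a uniformly random r-dimensional affine subspace R of F^t, that P₁ and P₂ agree identically on R is at most (d/q)^{r+1}. -/
open Finset
open scoped Classical BigOperators

noncomputable section

def pr {α : Type*} (s : Finset α) (p : α → Prop) : ℝ :=
  ((s.filter p).card : ℝ) / (s.card : ℝ)

def ex {α : Type*} (s : Finset α) (f : α → ℝ) : ℝ :=
  (∑ a ∈ s, f a) / (s.card : ℝ)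

def IsAffOfDim {F : Type} [Field F] {m : ℕ} (k : ℕ) (S : Set (Fin m → F)) : Prop :=
  ∃ (x₀ : Fin m → F) (W : Submodule F (Fin m → F)),
    Module.finrank F W = k ∧ S = {x | x - x₀ ∈ W}

def aff (F : Type) [Field F] [Fintype F] (m k : ℕ) : Finset (Set (Fin m → F)) :=
  Finset.univ.filter (fun S => IsAffOfDim k S)

def affThrough (F : Type) [Field F] [Fintype F] (m k : ℕ) (R : Set (Fin m → F)) :
    Finset (Set (Fin m → F)) :=
  (aff F m k).filter (fun S => R ⊆ S)

def affMem (F : Type) [Field F] [Fintype F] (m k : ℕ) (x : Fin m → F) :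
    Finset (Set (Fin m → F)) :=
  (aff F m k).filter (fun S => x ∈ S)

def DegOn (F : Type) [Field F] {m : ℕ} (d : ℕ) (S : Set (Fin m → F))
    (h : (Fin m → F) → F) : Prop :=
  ∃ P : MvPolynomial (Fin m) F, P.totalDegree ≤ d ∧ ∀ x ∈ S, h x = MvPolynomial.eval x P

def alphaPoint (F : Type) [Field F] [Fintype F] (m k : ℕ)
    (T : Set (Fin m → F) → (Fin m → F) → F) : ℝ :=
  ex (Finset.univ : Finset (Fin m → F)) (fun x =>
    pr ((affMem F m k x) ×ˢ (affMem F m k x)) (fun p => T p.1 x = T p.2 x))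

def alphaLine (F : Type) [Field F] [Fintype F] (m k : ℕ)
    (T : Set (Fin m → F) → (Fin m → F) → F) : ℝ :=
  ex (aff F m 1) (fun ℓ =>
    pr ((affThrough F m k ℓ) ×ˢ (affThrough F m k ℓ))
      (fun p => ∀ x ∈ ℓ, T p.1 x = T p.2 x))

def alphaSub (F : Type) [Field F] [Fintype F] (m s k r : ℕ)
    (T : Set (Fin m → F) → (Fin m → F) → F) : ℝ :=
  ex (aff F m k) (fun K =>
    ex ((affThrough F m s K) ×ˢ (affThrough F m s K)) (fun p =>
      pr ((aff F m r).filter (fun R => R ⊆ K))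
        (fun R => ∀ x ∈ R, T p.1 x = T p.2 x)))

def Mop {A B : Type*} [Fintype A] [Fintype B] (Adj : A → B → Prop)
    (v : B → ℝ) (a : A) : ℝ :=
  (∑ b ∈ Finset.univ.filter (fun b => Adj a b), v b) /
    ((Finset.univ.filter (fun b => Adj a b)).card : ℝ)

def nrm {ι : Type*} [Fintype ι] (v : ι → ℝ) : ℝ :=
  Real.sqrt ((∑ i, v i ^ 2) / (Fintype.card ι : ℝ))

def lam {A B : Type*} [Fintype A] [Fintype B] (Adj : A → B → Prop) : ℝ :=
  sSup {r : ℝ | ∃ v : B → ℝ, (∑ b, v b) = 0 ∧ v ≠ 0 ∧ r = nrm (Mop Adj v) / nrm v}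

def Cxs (F : Type) [Field F] [Fintype F] (m : ℕ)
    (T : Set (Fin m → F) → (Fin m → F) → F) (x : Fin m → F) (σ : F) :
    Finset (Set (Fin m → F)) :=
  (affMem F m 3 x).filter (fun C => T C x = σ)

def Excellent (F : Type) [Field F] [Fintype F] (m : ℕ)
    (T : Set (Fin m → F) → (Fin m → F) → F) (ε γ : ℝ) (x : Fin m → F) (σ : F) : Prop :=
  ε / 2 ≤ pr (affMem F m 3 x) (fun C => T C x = σ) ∧
  ex (Cxs F m T x σ) (fun C₁ =>
    ex ((aff F m 1).filter (fun ℓ => x ∈ ℓ ∧ ℓ ⊆ C₁)) (fun ℓ =>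
      pr ((Cxs F m T x σ).filter (fun C₂ => ℓ ⊆ C₂))
        (fun C₂ => ¬ ∀ z ∈ ℓ, T C₁ z = T C₂ z))) ≤ γ

def IsLocalFn (F : Type) [Field F] [Fintype F] (m : ℕ)
    (T : Set (Fin m → F) → (Fin m → F) → F) (x : Fin m → F) (σ : F)
    (f : (Fin m → F) → F) : Prop :=
  ∀ (y : Fin m → F) (τ : F),
    ((Cxs F m T x σ).filter (fun C => y ∈ C ∧ T C y = τ)).card ≤
      ((Cxs F m T x σ).filter (fun C => y ∈ C ∧ T C y = f y)).card

def ApproxOn (F : Type) [Field F] [Fintype F] {m : ℕ} (γ : ℝ)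
    (S : Set (Fin m → F)) (u v : (Fin m → F) → F) : Prop :=
  1 - γ ≤ pr (Finset.univ.filter (fun z => z ∈ S)) (fun z => u z = v z)

def FxSet (F : Type) [Field F] [Fintype F] (m : ℕ)
    (T : Set (Fin m → F) → (Fin m → F) → F) (γ : ℝ) (x : Fin m → F)
    (f : (Fin m → F) → F) : Finset (Set (Fin m → F)) :=
  (affMem F m 3 x).filter (fun C => ApproxOn F (2 * γ) C (T C) f)

def lineThrough {F : Type} [Field F] {m : ℕ} (x y : Fin m → F) : Set (Fin m → F) :=
  {z | ∃ t : F, z = x + t • (y - x)}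

/-!
Parametrize an `r`-flat by a base point `x₀` and an independent `r`-tuple `v`: every flat arises
from the same number of such tuples, so a uniform flat is the image of a uniform pointed tuple.
Let `Z` be the zero set of `P₁ - P₂`. Building the tuple one vector at a time, the `(i+1)`-st
vector has `q^t - q^i` admissible values, while keeping the flat inside `Z` leaves at most
`|Z| - q^i` of them (`x₀ + vᵢ₊₁` must lie in `Z` but outside the current flat, which already has
`q^i` points in `Z`). By Schwartz–Zippel `|Z| ≤ (d/q) q^t`, so for `d ≤ q` each such ratio, and
the ratio `|Z| / q^t` for the base point, is at most `d/q`.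
-/

namespace AffineFlats

open Module Submodule

variable {K V : Type*} [Field K] [AddCommGroup V] [Module K V]

lemma setOf_sub_mem_eq_iff {a b : V} {U W : Submodule K V} :
    {x | x - a ∈ U} = {x | x - b ∈ W} ↔ a - b ∈ W ∧ U = W := by
  constructor
  · intro h
    have hab : a - b ∈ W := by
      have : a ∈ {x | x - a ∈ U} := by simp
      rwa [h] at this
    refine ⟨hab, Submodule.ext fun z => ?_⟩
    have := Set.ext_iff.mp h (z + a)
    simp only [Set.mem_ofPred_eq, add_sub_cancel_right, add_sub_assoc] at this
    rw [this, Submodule.add_mem_iff_left W hab]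
  · rintro ⟨hab, rfl⟩
    ext x
    simp only [Set.mem_ofPred_eq]
    rw [← Submodule.add_mem_iff_left U hab, sub_add_sub_cancel]

variable (K) in
def flatOf {r : ℕ} (p : V × (Fin r → V)) : Set V :=
  {x | x - p.1 ∈ span K (Set.range p.2)}

lemma flatOf_subset_flatOf_cons {r : ℕ} (x₀ v₀ : V) (v : Fin r → V) :
    flatOf K (x₀, v) ⊆ flatOf K (x₀, Fin.cons v₀ v) :=
  fun _ hx => span_mono (by rw [Fin.range_cons]; exact Set.subset_insert _ _) hx

lemma add_mem_flatOf_cons {r : ℕ} (x₀ v₀ : V) (v : Fin r → V) :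
    x₀ + v₀ ∈ flatOf K (x₀, Fin.cons v₀ v) := by
  simpa [flatOf, Fin.range_cons] using subset_span (Set.mem_insert v₀ (Set.range v))

variable [Fintype V]

variable (K V) in
def indepTuples (r : ℕ) : Finset (V × (Fin r → V)) :=
  {p | LinearIndependent K p.2}

lemma card_filter_indepTuples_succ {r : ℕ} (Q : V × (Fin (r + 1) → V) → Prop) :
    #{p ∈ indepTuples K V (r + 1) | Q p} =
      ∑ w ∈ indepTuples K V r,
        #{v₀ | v₀ ∉ span K (Set.range w.2) ∧ Q (w.1, Fin.cons v₀ w.2)} := by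
  rw [← Finset.card_sigma]
  refine Finset.card_nbij' (fun p => ⟨(p.1, Fin.tail p.2), p.2 0⟩)
    (fun s => (s.1.1, Fin.cons s.2 s.1.2)) ?_ ?_ ?_ ?_
  · intro p hp
    simp_all [indepTuples, linearIndependent_finSucc]
  · intro s hs
    simp_all [indepTuples, linearIndependent_finCons]
  · intro p _
    simp
  · intro s _
    simp

lemma card_indepTuples_zero : #(indepTuples K V 0) = Fintype.card V := by
  simp [indepTuples]

variable (K) in
def badTuples (Z : Finset V) (r : ℕ) : Finset (V × (Fin r → V)) :=
  {p ∈ indepTuples K V r | flatOf K p ⊆ Z}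

lemma card_badTuples_zero_le (Z : Finset V) : #(badTuples K Z 0) ≤ #Z := by
  refine Finset.card_le_card_of_injOn Prod.fst (fun p hp => ?_)
    (fun p _ p' _ h => Prod.ext h (Subsingleton.elim _ _))
  simp only [badTuples, Finset.coe_filter, Set.mem_ofPred_eq] at hp
  exact hp.2 (by simp [flatOf])

variable [Fintype K]

lemma card_filter_sub_mem (x₀ : V) (W : Submodule K V) :
    #{x | x - x₀ ∈ W} = Fintype.card K ^ finrank K W := by
  rw [← Module.card_eq_pow_finrank (K := K) (V := W), ← Finset.card_univ]
  refine Finset.card_nbij' (fun x => if h : x - x₀ ∈ W then ⟨x - x₀, h⟩ else 0)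
    (fun w => (w : V) + x₀) ?_ ?_ ?_ ?_
  · simp [Set.MapsTo]
  · simp [Set.MapsTo]
  · intro x hx
    simp_all
  · intro w _
    simp

lemma card_flatOf {r : ℕ} {p : V × (Fin r → V)} (hp : p ∈ indepTuples K V r) :
    #{x | x ∈ flatOf K p} = Fintype.card K ^ r := by
  rw [flatOf]
  simp only [Set.mem_ofPred_eq]
  rw [card_filter_sub_mem, finrank_span_eq_card (by simpa [indepTuples] using hp),
    Fintype.card_fin]

lemma card_not_mem_span_add {r : ℕ} {w : Fin r → V} (hw : LinearIndependent K w) :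
    #{v | v ∉ span K (Set.range w)} + Fintype.card K ^ r = Fintype.card V := by
  have h := card_flatOf (K := K) (p := ((0 : V), w)) (by simpa [indepTuples] using hw)
  simp only [flatOf, sub_zero, Set.mem_ofPred_eq] at h
  rw [← h, add_comm, Finset.card_filter_add_card_filter_not, Finset.card_univ]

lemma card_indepTuples_succ_add (r : ℕ) :
    #(indepTuples K V (r + 1)) + #(indepTuples K V r) * Fintype.card K ^ r =
      #(indepTuples K V r) * Fintype.card V := by
  have h := card_filter_indepTuples_succ (K := K) (V := V) (r := r) (fun _ => True)
  simp only [and_true, Finset.filter_true] at h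
  rw [h, ← smul_eq_mul, ← Finset.sum_const, ← smul_eq_mul, ← Finset.sum_const,
    ← Finset.sum_add_distrib]
  refine Finset.sum_congr rfl fun w hw => card_not_mem_span_add ?_
  simpa [indepTuples] using hw

lemma card_extensions_add_le {r : ℕ} {Z : Finset V} {w : V × (Fin r → V)}
    (hw : w ∈ badTuples K Z r) :
    #{v₀ | v₀ ∉ span K (Set.range w.2) ∧ flatOf K (w.1, Fin.cons v₀ w.2) ⊆ Z} +
      Fintype.card K ^ r ≤ #Z := by
  simp only [badTuples, Finset.mem_filter] at hw
  calc _ = #{v₀ | v₀ ∉ span K (Set.range w.2) ∧ flatOf K (w.1, Fin.cons v₀ w.2) ⊆ Z} +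
        #{x | x ∈ flatOf K w} := by rw [card_flatOf hw.1]
    _ ≤ #{x ∈ Z | x ∉ flatOf K w} + #{x ∈ Z | x ∈ flatOf K w} := by
      refine add_le_add (Finset.card_le_card_of_injOn (w.1 + ·) (fun v₀ hv₀ => ?_)
        (fun _ _ _ _ h => add_left_cancel h)) (Finset.card_le_card fun x hx => ?_)
      · simp only [Finset.coe_filter, Finset.mem_univ, true_and, Set.mem_ofPred_eq] at hv₀ ⊢
        exact ⟨hv₀.2 (add_mem_flatOf_cons _ _ _), by simpa [flatOf] using hv₀.1⟩
      · simp only [Finset.mem_filter, Finset.mem_univ, true_and] at hx ⊢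
        exact ⟨hw.2 hx, hx⟩
    _ = #Z := by rw [add_comm, Finset.card_filter_add_card_filter_not]

lemma card_badTuples_succ_add_le (Z : Finset V) (r : ℕ) :
    #(badTuples K Z (r + 1)) + #(badTuples K Z r) * Fintype.card K ^ r ≤
      #(badTuples K Z r) * #Z := by
  have hsum : #(badTuples K Z (r + 1)) = ∑ w ∈ badTuples K Z r,
      #{v₀ | v₀ ∉ span K (Set.range w.2) ∧ flatOf K (w.1, Fin.cons v₀ w.2) ⊆ Z} := by
    rw [badTuples, card_filter_indepTuples_succ, badTuples]
    refine (Finset.sum_filter_of_ne fun w _ hw => ?_).symm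
    obtain ⟨v₀, hv₀⟩ := Finset.card_ne_zero.1 hw
    exact (flatOf_subset_flatOf_cons w.1 v₀ w.2).trans (Finset.mem_filter.1 hv₀).2.2
  calc _ = ∑ w ∈ badTuples K Z r, (#{v₀ | v₀ ∉ span K (Set.range w.2) ∧
          flatOf K (w.1, Fin.cons v₀ w.2) ⊆ Z} + Fintype.card K ^ r) := by
        rw [hsum, Finset.sum_add_distrib, Finset.sum_const, smul_eq_mul]
    _ ≤ #(badTuples K Z r) * #Z :=
        Finset.sum_le_card_nsmul _ _ _ fun _ hw => card_extensions_add_le hw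

lemma card_badTuples_le (Z : Finset V) {ρ : ℝ} (hρ₀ : 0 ≤ ρ) (hρ₁ : ρ ≤ 1)
    (hZ : (#Z : ℝ) ≤ ρ * Fintype.card V) (r : ℕ) :
    (#(badTuples K Z r) : ℝ) ≤ ρ ^ (r + 1) * #(indepTuples K V r) := by
  induction r with
  | zero =>
    rw [card_indepTuples_zero, zero_add, pow_one]
    exact (Nat.cast_le.2 (card_badTuples_zero_le Z)).trans hZ
  | succ r ih =>
    have hb : (#(badTuples K Z (r + 1)) : ℝ) ≤
        #(badTuples K Z r) * (#Z - (Fintype.card K : ℝ) ^ r) := by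
      rw [mul_sub, le_sub_iff_add_le]
      exact_mod_cast card_badTuples_succ_add_le (K := K) Z r
    have hs : (#(indepTuples K V (r + 1)) : ℝ) =
        #(indepTuples K V r) * (Fintype.card V - (Fintype.card K : ℝ) ^ r) := by
      rw [mul_sub, eq_sub_iff_add_eq]
      exact_mod_cast card_indepTuples_succ_add (K := K) (V := V) r
    set c := (Fintype.card K : ℝ) ^ r
    rcases le_or_gt c #Z with hcZ | hZc
    · have hc : 0 ≤ c := by positivity
      calc _ ≤ #(badTuples K Z r) * (#Z - c) := hb
        _ ≤ ρ ^ (r + 1) * #(indepTuples K V r) * (ρ * (Fintype.card V - c)) := by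
          gcongr
          nlinarith
        _ = ρ ^ (r + 1 + 1) * #(indepTuples K V (r + 1)) := by rw [hs]; ring
    · have : (#(badTuples K Z r) : ℝ) * (#Z - c) ≤ 0 :=
        mul_nonpos_of_nonneg_of_nonpos (by positivity) (by linarith)
      exact hb.trans (this.trans (by positivity))

lemma card_linearIndependent_span_eq {W : Submodule K V} :
    #{v : Fin (finrank K W) → V | LinearIndependent K v ∧ span K (Set.range v) = W} =
      ∏ i : Fin (finrank K W), (Fintype.card K ^ finrank K W - Fintype.card K ^ (i : ℕ)) := by
  rw [← card_linearIndependent le_rfl, ← Fintype.card_subtype, ← Nat.card_eq_fintype_card]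
  refine Nat.card_congr
    { toFun := fun v => ⟨fun i => ⟨v.1 i, v.2.2.le (subset_span (Set.mem_range_self i))⟩,
        LinearIndependent.of_comp W.subtype v.2.1⟩
      invFun := fun u => ⟨W.subtype ∘ u.1, u.2.map' _ W.ker_subtype, by
        rw [Set.range_comp, ← map_span, u.2.span_eq_top_of_card_eq_finrank' (by simp),
          Submodule.map_top, range_subtype]⟩
      left_inv := fun _ => rfl
      right_inv := fun _ => rfl }

lemma card_filter_flatOf_eq (x₀ : V) (W : Submodule K V) :
    #{p ∈ indepTuples K V (finrank K W) | flatOf K p = {x | x - x₀ ∈ W}} =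
      Fintype.card K ^ finrank K W *
        ∏ i : Fin (finrank K W), (Fintype.card K ^ finrank K W - Fintype.card K ^ (i : ℕ)) := by
  rw [← card_linearIndependent_span_eq, ← card_filter_sub_mem x₀ W, ← Finset.card_product]
  congr 1
  ext p
  simp only [indepTuples, flatOf, setOf_sub_mem_eq_iff, Finset.mem_filter, Finset.mem_univ,
    true_and, Finset.mem_product]
  tauto

end AffineFlats

lemma pr_eq_pr_comp_of_card_fiber_eq {α β : Type*} {s : Finset α} {t : Finset β} {f : α → β}
    (hf : ∀ a ∈ s, f a ∈ t) {k : ℕ} (hk : k ≠ 0) (hfib : ∀ b ∈ t, #{a ∈ s | f a = b} = k)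
    (P : β → Prop) : pr t P = pr s (fun a => P (f a)) := by
  have hcard : ∀ t' ⊆ t, #{a ∈ s | f a ∈ t'} = #t' * k := fun t' ht' => by
    rw [Finset.card_eq_sum_card_fiberwise (s := {a ∈ s | f a ∈ t'}) (t := t')
        fun a ha => (Finset.mem_filter.1 ha).2,
      Finset.sum_const_nat fun b hb => ?_]
    rw [Finset.filter_filter, ← hfib b (ht' hb)]
    congr 1
    ext a
    simp only [Finset.mem_filter]
    constructor
    · exact fun h => ⟨h.1, h.2.2⟩
    · rintro ⟨ha, rfl⟩
      exact ⟨ha, hb, rfl⟩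
  have hs : #s = #t * k := by
    rw [← hcard t subset_rfl, Finset.filter_true_of_mem hf]
  have hsP : #{a ∈ s | P (f a)} = #{b ∈ t | P b} * k := by
    rw [← hcard _ (Finset.filter_subset _ _)]
    exact congrArg _ (Finset.filter_congr fun a ha => by simp [hf a ha])
  rw [pr, pr, hs, hsP]
  push_cast
  exact (mul_div_mul_right _ _ (by exact_mod_cast hk)).symm

lemma pr_le_one {α : Type*} (s : Finset α) (P : α → Prop) : pr s P ≤ 1 :=
  div_le_one_of_le₀ (by exact_mod_cast Finset.card_filter_le _ _) (by positivity)

lemma card_filter_eval_eq_zero_le {F : Type} [Field F] [Fintype F] {n : ℕ} {p : MvPolynomial (Fin n) F}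
    (hp : p ≠ 0) :
    (#{x | MvPolynomial.eval x p = 0} : ℝ) ≤
      p.totalDegree / Fintype.card F * Fintype.card (Fin n → F) := by
  have h := MvPolynomial.schwartz_zippel_totalDegree hp Finset.univ
  rw [Fintype.piFinset_univ, Finset.card_univ, div_le_iff₀ (by positivity)] at h
  have h' := (NNRat.cast_le (K := ℝ)).2 h
  push_cast at h'
  simpa [Fintype.card_fun] using h'

section AffineSubspaces

open AffineFlats

variable {F : Type} [Field F] [Fintype F] {t : ℕ}

lemma flatOf_mem_aff {r : ℕ} {p : (Fin t → F) × (Fin r → Fin t → F)}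
    (hp : p ∈ indepTuples F (Fin t → F) r) : flatOf F p ∈ aff F t r := by
  simp only [aff, Finset.mem_filter, Finset.mem_univ, true_and]
  exact ⟨p.1, _, (finrank_span_eq_card (by simpa [indepTuples] using hp)).trans
    (Fintype.card_fin r), rfl⟩

lemma pr_aff_eq_pr_indepTuples (r : ℕ) (P : Set (Fin t → F) → Prop) :
    pr (aff F t r) P = pr (indepTuples F (Fin t → F) r) (fun p => P (flatOf F p)) := by
  refine pr_eq_pr_comp_of_card_fiber_eq (fun _ hp => flatOf_mem_aff hp)
    (k := Fintype.card F ^ r * ∏ i : Fin r, (Fintype.card F ^ r - Fintype.card F ^ (i : ℕ)))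
    ?_ (fun R hR => ?_) P
  · refine mul_ne_zero (by positivity) (Finset.prod_ne_zero_iff.2 fun i _ => ?_)
    exact Nat.sub_ne_zero_of_lt (Nat.pow_lt_pow_right Fintype.one_lt_card i.2)
  · obtain ⟨x₀, W, rfl, rfl⟩ := (Finset.mem_filter.1 hR).2
    exact card_filter_flatOf_eq x₀ W

lemma pr_aff_subset_le {Z : Finset (Fin t → F)} {ρ : ℝ} (hρ₀ : 0 ≤ ρ) (hρ₁ : ρ ≤ 1)
    (hZ : (#Z : ℝ) ≤ ρ * Fintype.card (Fin t → F)) (r : ℕ) :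
    pr (aff F t r) (fun R => R ⊆ Z) ≤ ρ ^ (r + 1) := by
  rw [pr_aff_eq_pr_indepTuples, pr]
  exact div_le_of_le_mul₀ (by positivity) (by positivity) (card_badTuples_le Z hρ₀ hρ₁ hZ r)

end AffineSubspaces

theorem distinct_polys_agree_on_random_subspace_general
    (F : Type) [Field F] [Fintype F] (t d r : ℕ)
    (P₁ P₂ : MvPolynomial (Fin t) F)
    (h₁ : P₁.totalDegree ≤ d) (h₂ : P₂.totalDegree ≤ d) (hne : P₁ ≠ P₂) :
    pr (aff F t r)
        (fun R => ∀ x ∈ R, MvPolynomial.eval x P₁ = MvPolynomial.eval x P₂) ≤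
      ((d : ℝ) / (Fintype.card F : ℝ)) ^ (r + 1) := by
  have hq : (0 : ℝ) < Fintype.card F := by exact_mod_cast Fintype.card_pos
  rcases le_or_gt (Fintype.card F : ℝ) d with hqd | hdq
  · exact (pr_le_one _ _).trans (one_le_pow₀ ((one_le_div hq).2 hqd))
  have hdeg : ((P₁ - P₂).totalDegree : ℝ) ≤ d := by
    exact_mod_cast (MvPolynomial.totalDegree_sub P₁ P₂).trans (max_le h₁ h₂)
  have hZ : (#{x | MvPolynomial.eval x (P₁ - P₂) = 0} : ℝ) ≤
      d / Fintype.card F * Fintype.card (Fin t → F) :=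
    (card_filter_eval_eq_zero_le (sub_ne_zero.2 hne)).trans (by gcongr)
  convert pr_aff_subset_le (by positivity) ((div_le_one hq).2 hdq.le) hZ r using 2 with R
  simp [Set.subset_def, sub_eq_zero]

/-- extended Schwartz–Zippel: two distinct degree-d polynomials agree on
a random r-dimensional affine subspace with probability at most (d/q)^(r+1). -/
theorem distinct_polys_agree_on_random_subspace
    (F : Type) [Field F] [Fintype F] (t d r : ℕ) (hr : r ≤ t)
    (P₁ P₂ : MvPolynomial (Fin t) F)
    (h₁ : P₁.totalDegree ≤ d) (h₂ : P₂.totalDegree ≤ d) (hne : P₁ ≠ P₂) :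
    pr (aff F t r)
        (fun R => ∀ x ∈ R, MvPolynomial.eval x P₁ = MvPolynomial.eval x P₂) ≤
      ((d : ℝ) / (Fintype.card F : ℝ)) ^ (r + 1) :=
  distinct_polys_agree_on_random_subspace_general F t d r P₁ P₂ h₁ h₂ hne
end
end

section
/- Let G = (A ∪ B, E) be a bi-regular bipartite graph, let B' ⊆ B be a nonempty subset of measure μ = |B'|/|B|, and let E' ⊆ E be any subset of edges. Let D₁ be the distribution on edges obtained by picking b ∈ B' uniformly and then a uniform neighbor a of b; let D₂ be the distribution obtained by picking a ∈ A uniformly and then, if N(a) ∩ B' is nonempty, a uniform b ∈ N(a) ∩ B' (outputting ⊥ otherwise, which counts as the edge not being in E'). Then |Pr_{(a,b)∼D₁}[(a,b) ∈ E'] − Pr_{(a,b)∼D₂}[(a,b) ∈ E']| ≤ λ(G)/√μ. -/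
open Finset
open scoped Classical BigOperators

noncomputable section

/-!
Let `v = 1_{B'} - μ` and let `P a` be the probability of `E'` under `D₂` given the first vertex `a`.
Double counting the edges of `E'` between `A` and `B'`, together with `dA |A| = dB |B|`, gives
`Pr_{D₁}[E'] - Pr_{D₂}[E'] = ⟨P, M v⟩ / μ`. As `0 ≤ P ≤ 1` and `v ⊥ 1`, Cauchy–Schwarz bounds
this by `‖M v‖ / μ ≤ λ ‖v‖ / μ`, and `‖v‖² = μ (1 - μ) ≤ μ`.
-/

section Norm

variable {ι : Type*} [Fintype ι]

lemma nrm_nonneg (u : ι → ℝ) : 0 ≤ nrm u := Real.sqrt_nonneg _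

lemma nrm_sq (u : ι → ℝ) : nrm u ^ 2 = (∑ i, u i ^ 2) / Fintype.card ι :=
  Real.sq_sqrt (by positivity)

lemma nrm_pos {u : ι → ℝ} (hu : u ≠ 0) : 0 < nrm u := by
  obtain ⟨i, hi⟩ := Function.ne_iff.1 hu
  have : Nonempty ι := ⟨i⟩
  refine Real.sqrt_pos.2 (div_pos ?_ (Nat.cast_pos.2 Fintype.card_pos))
  exact Finset.sum_pos' (fun j _ => sq_nonneg (u j)) ⟨i, Finset.mem_univ i, sq_pos_of_ne_zero hi⟩

lemma nrm_le_one {u : ι → ℝ} (hu : ∀ i, |u i| ≤ 1) : nrm u ≤ 1 := by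
  refine Real.sqrt_le_one.2 (div_le_one_of_le₀ ?_ (Nat.cast_nonneg _))
  calc ∑ i, u i ^ 2 ≤ ∑ _i : ι, (1 : ℝ) :=
        Finset.sum_le_sum fun i _ => (sq_le_one_iff_abs_le_one _).2 (hu i)
    _ = Fintype.card ι := by simp

lemma abs_sum_mul_div_card_le_nrm_mul_nrm (u w : ι → ℝ) :
    |∑ i, u i * w i| / Fintype.card ι ≤ nrm u * nrm w := by
  refine pow_le_pow_iff_left₀ (by positivity) (mul_nonneg (nrm_nonneg u) (nrm_nonneg w))
    two_ne_zero |>.1 ?_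
  rw [div_pow, sq_abs, mul_pow, nrm_sq, nrm_sq, div_mul_div_comm, ← sq]
  gcongr
  exact Finset.sum_mul_sq_le_sq_mul_sq _ u w

end Norm

section CenteredIndicator

variable {ι : Type*} [Fintype ι]

def centeredIndicator (s : Finset ι) (i : ι) : ℝ :=
  (if i ∈ s then 1 else 0) - (s.card : ℝ) / Fintype.card ι

lemma card_mul_card_div_card (s : Finset ι) :
    (Fintype.card ι : ℝ) * ((s.card : ℝ) / Fintype.card ι) = s.card := by
  rcases (Fintype.card ι).eq_zero_or_pos with h | h
  · simp [h, Finset.card_eq_zero.1 (Nat.le_zero.1 (h ▸ Finset.card_le_univ s))]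
  · exact mul_div_cancel₀ _ (by positivity)

lemma card_div_card_pos {s : Finset ι} (hs : s.Nonempty) :
    0 < (s.card : ℝ) / Fintype.card ι :=
  have : Nonempty ι := hs.to_type
  div_pos (Nat.cast_pos.2 hs.card_pos) (Nat.cast_pos.2 Fintype.card_pos)

lemma sum_centeredIndicator (s : Finset ι) : ∑ i, centeredIndicator s i = 0 := by
  simp [centeredIndicator, Finset.sum_sub_distrib, card_mul_card_div_card]

lemma nrm_centeredIndicator_le (s : Finset ι) :
    nrm (centeredIndicator s) ≤ Real.sqrt ((s.card : ℝ) / Fintype.card ι) := by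
  set μ := (s.card : ℝ) / Fintype.card ι
  have hsq : ∀ i, centeredIndicator s i ^ 2 = (1 - 2 * μ) * (if i ∈ s then 1 else 0) + μ ^ 2 := by
    intro i
    by_cases hi : i ∈ s <;> simp only [centeredIndicator, hi, if_true, if_false] <;> ring
  have hsum : ∑ i, centeredIndicator s i ^ 2 = Fintype.card ι * (μ * (1 - μ)) := by
    simp only [hsq, Finset.sum_add_distrib, ← Finset.mul_sum, Finset.sum_ite_mem, Finset.univ_inter,
      Finset.sum_const, Finset.card_univ, nsmul_eq_mul, mul_one]
    rw [← card_mul_card_div_card s]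
    ring
  refine Real.sqrt_le_sqrt ?_
  rcases (Fintype.card ι).eq_zero_or_pos with h | h
  · simp [hsum, h, μ]
  · rw [hsum, mul_div_cancel_left₀ _ (by positivity)]
    nlinarith [sq_nonneg μ]

end CenteredIndicator

section Biregular

variable {A B : Type*} [Fintype A] [Fintype B] (Adj : A → B → Prop) {dA dB : ℕ}

lemma degree_mul_card_eq_degree_mul_card
    (hregA : ∀ a, (Finset.univ.filter (fun b => Adj a b)).card = dA)
    (hregB : ∀ b, (Finset.univ.filter (fun a => Adj a b)).card = dB) :
    (dA : ℝ) * Fintype.card A = dB * Fintype.card B := by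
  have := Finset.sum_card_bipartiteAbove_eq_sum_card_bipartiteBelow
    (s := (Finset.univ : Finset A)) (t := (Finset.univ : Finset B)) Adj
  simp only [Finset.bipartiteAbove, Finset.bipartiteBelow, hregA, hregB, Finset.sum_const,
    Finset.card_univ, smul_eq_mul] at this
  norm_cast
  linarith

lemma sum_Mop (hregA : ∀ a, (Finset.univ.filter (fun b => Adj a b)).card = dA)
    (hregB : ∀ b, (Finset.univ.filter (fun a => Adj a b)).card = dB) (f : B → ℝ) :
    ∑ a, Mop Adj f a = dB / dA * ∑ b, f b := by
  simp only [Mop, hregA, ← Finset.sum_div]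
  rw [Finset.sum_comm' (t' := Finset.univ) (s' := fun b => Finset.univ.filter (Adj · b))
    (by simp)]
  simp [hregB, Finset.mul_sum, div_eq_inv_mul, mul_assoc]

lemma Mop_sq_le (v : B → ℝ) (a : A) : Mop Adj v a ^ 2 ≤ Mop Adj (fun b => v b ^ 2) a :=
  sum_div_card_sq_le_sum_sq_div_card

lemma nrm_Mop_le (hregA : ∀ a, (Finset.univ.filter (fun b => Adj a b)).card = dA)
    (hregB : ∀ b, (Finset.univ.filter (fun a => Adj a b)).card = dB) (v : B → ℝ) :
    nrm (Mop Adj v) ≤ nrm v := by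
  have hdeg : (dB : ℝ) / dA / Fintype.card A ≤ 1 / Fintype.card B := by
    rw [div_div, degree_mul_card_eq_degree_mul_card Adj hregA hregB, ← div_div]
    exact div_le_div_of_nonneg_right (div_self_le_one _) (Nat.cast_nonneg _)
  refine Real.sqrt_le_sqrt ?_
  calc (∑ a, Mop Adj v a ^ 2) / Fintype.card A
      ≤ (∑ a, Mop Adj (fun b => v b ^ 2) a) / Fintype.card A := by
        gcongr with a; exact Mop_sq_le Adj v a
    _ = dB / dA / Fintype.card A * ∑ b, v b ^ 2 := by
        rw [sum_Mop Adj hregA hregB]; ring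
    _ ≤ 1 / Fintype.card B * ∑ b, v b ^ 2 := by gcongr
    _ = (∑ b, v b ^ 2) / Fintype.card B := by ring

lemma lam_nonneg : 0 ≤ lam Adj :=
  Real.sSup_nonneg <| by
    rintro _ ⟨v, -, -, rfl⟩
    exact div_nonneg (nrm_nonneg _) (nrm_nonneg _)

lemma nrm_Mop_le_lam_mul (hregA : ∀ a, (Finset.univ.filter (fun b => Adj a b)).card = dA)
    (hregB : ∀ b, (Finset.univ.filter (fun a => Adj a b)).card = dB) {v : B → ℝ}
    (hv : ∑ b, v b = 0) : nrm (Mop Adj v) ≤ lam Adj * nrm v := by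
  rcases eq_or_ne v 0 with rfl | hv0
  · simp [Mop, nrm]
  have hbdd : BddAbove {r : ℝ | ∃ v : B → ℝ, ∑ b, v b = 0 ∧ v ≠ 0 ∧
      r = nrm (Mop Adj v) / nrm v} := by
    refine ⟨1, ?_⟩
    rintro _ ⟨w, -, hw0, rfl⟩
    exact div_le_one_of_le₀ (nrm_Mop_le Adj hregA hregB w) (nrm_nonneg w)
  rw [← div_le_iff₀ (nrm_pos hv0)]
  exact le_csSup hbdd ⟨v, hv, hv0, rfl⟩

end Biregular

section Probability

variable {α : Type*}

lemma abs_pr_le_one (s : Finset α) (p : α → Prop) : |pr s p| ≤ 1 := by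
  rw [abs_of_nonneg (by unfold pr; positivity)]
  exact div_le_one_of_le₀ (by exact_mod_cast Finset.card_filter_le s p) (Nat.cast_nonneg _)

lemma pr_mul_card (s : Finset α) (p : α → Prop) : pr s p * s.card = (s.filter p).card := by
  rcases s.eq_empty_or_nonempty with rfl | hs
  · simp [pr]
  · exact div_mul_cancel₀ _ (by positivity)

end Probability

section EdgeSampling

variable {A B : Type*} [Fintype A] [Fintype B] (Adj : A → B → Prop) {dA dB : ℕ}

lemma Mop_centeredIndicator (hdA : 0 < dA)
    (hregA : ∀ a, (Finset.univ.filter (fun b => Adj a b)).card = dA) (s : Finset B) (a : A) :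
    Mop Adj (centeredIndicator s) a =
      (Finset.univ.filter (fun b => Adj a b ∧ b ∈ s)).card / dA - s.card / Fintype.card B := by
  simp only [Mop, centeredIndicator, hregA, Finset.sum_sub_distrib, Finset.sum_boole,
    Finset.filter_filter, Finset.sum_const, nsmul_eq_mul]
  field_simp

lemma sum_card_filter_adj_eq_sum_card_filter_adj (s : Finset B) (E' : A → B → Prop) :
    ∑ b ∈ s, ((Finset.univ.filter (fun a => Adj a b)).filter (fun a => E' a b)).card =
      ∑ a, ((Finset.univ.filter (fun b => Adj a b ∧ b ∈ s)).filter (fun b => E' a b)).card := by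
  rw [eq_comm]
  convert Finset.sum_card_bipartiteAbove_eq_sum_card_bipartiteBelow
    (s := Finset.univ) (t := s) (fun a b => Adj a b ∧ E' a b) using 3 with a - b -
  · ext b; simp only [Finset.bipartiteAbove, Finset.mem_filter, Finset.mem_univ, true_and]; tauto
  · ext a; simp [Finset.bipartiteBelow]

lemma ex_pr_sub_ex_pr_eq (hdA : 0 < dA)
    (hregA : ∀ a, (Finset.univ.filter (fun b => Adj a b)).card = dA)
    (hregB : ∀ b, (Finset.univ.filter (fun a => Adj a b)).card = dB)
    {s : Finset B} (hs : s.Nonempty) (E' : A → B → Prop) :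
    ex s (fun b => pr (Finset.univ.filter (fun a => Adj a b)) (fun a => E' a b)) -
      ex Finset.univ
        (fun a => pr (Finset.univ.filter (fun b => Adj a b ∧ b ∈ s)) (fun b => E' a b)) =
    (∑ a, pr (Finset.univ.filter (fun b => Adj a b ∧ b ∈ s)) (fun b => E' a b) *
        Mop Adj (centeredIndicator s) a) / ((s.card : ℝ) / Fintype.card B * Fintype.card A) := by
  set μ : ℝ := (s.card : ℝ) / Fintype.card B
  set P : A → ℝ := fun a => pr (Finset.univ.filter (fun b => Adj a b ∧ b ∈ s)) (fun b => E' a b)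
  set N : A → ℝ := fun a => (Finset.univ.filter (fun b => Adj a b ∧ b ∈ s)).card
  have hμ : μ ≠ 0 := (card_div_card_pos hs).ne'
  have hcount : (dB : ℝ) * s.card = μ * (dA * Fintype.card A) := by
    rw [degree_mul_card_eq_degree_mul_card Adj hregA hregB, ← card_mul_card_div_card s]
    ring
  have hD1 : ex s (fun b => pr (Finset.univ.filter (fun a => Adj a b)) (fun a => E' a b)) =
      (∑ a, P a * N a) / (μ * (dA * Fintype.card A)) := by
    have hPN : ∀ a, P a * N a =
        ((Finset.univ.filter (fun b => Adj a b ∧ b ∈ s)).filter (fun b => E' a b)).card :=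
      fun a => pr_mul_card _ _
    simp only [hPN, ex, pr, hregB, ← Finset.sum_div, div_div, ← hcount]
    exact_mod_cast congrArg (fun n : ℕ => (n : ℝ) / (dB * s.card))
      (sum_card_filter_adj_eq_sum_card_filter_adj Adj s E')
  have hMop : ∀ a, Mop Adj (centeredIndicator s) a = N a / dA - μ :=
    Mop_centeredIndicator Adj hdA hregA s
  rw [hD1]
  simp only [hMop, ex, Finset.card_univ, mul_sub, Finset.sum_sub_distrib, ← Finset.sum_mul,
    sub_div, mul_div_assoc', ← Finset.sum_div]
  field_simp
  ring

end EdgeSampling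

theorem edge_sampling_general
    {A B : Type} [Fintype A] [Fintype B]
    (Adj : A → B → Prop) (dA dB : ℕ) (hdA : 0 < dA)
    (hregA : ∀ a : A, (Finset.univ.filter (fun b => Adj a b)).card = dA)
    (hregB : ∀ b : B, (Finset.univ.filter (fun a => Adj a b)).card = dB)
    (B' : Finset B) (hB' : B'.Nonempty)
    (E' : A → B → Prop)
    (μ : ℝ) (hμ : μ = (B'.card : ℝ) / (Fintype.card B : ℝ)) :
    |ex B' (fun b => pr (Finset.univ.filter (fun a => Adj a b)) (fun a => E' a b)) -
      ex (Finset.univ : Finset A) (fun a =>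
        pr (Finset.univ.filter (fun b => Adj a b ∧ b ∈ B')) (fun b => E' a b))| ≤
      lam Adj / Real.sqrt μ := by
  have hμ_pos : 0 < μ := hμ ▸ card_div_card_pos hB'
  set P : A → ℝ := fun a => pr (Finset.univ.filter (fun b => Adj a b ∧ b ∈ B')) (fun b => E' a b)
  have hP : nrm P ≤ 1 := nrm_le_one fun a => abs_pr_le_one _ _
  have hMv : nrm (Mop Adj (centeredIndicator B')) ≤ lam Adj * Real.sqrt μ := by
    rw [hμ]
    calc nrm (Mop Adj (centeredIndicator B'))
        ≤ lam Adj * nrm (centeredIndicator B') :=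
          nrm_Mop_le_lam_mul Adj hregA hregB (sum_centeredIndicator B')
      _ ≤ _ := by gcongr; exacts [lam_nonneg Adj, nrm_centeredIndicator_le B']
  rw [ex_pr_sub_ex_pr_eq Adj hdA hregA hregB hB' E', ← hμ, abs_div,
    abs_of_nonneg (by positivity : 0 ≤ μ * Fintype.card A), mul_comm, ← div_div]
  calc |∑ a, P a * Mop Adj (centeredIndicator B') a| / Fintype.card A / μ
      ≤ nrm P * nrm (Mop Adj (centeredIndicator B')) / μ := by
        gcongr; exact abs_sum_mul_div_card_le_nrm_mul_nrm _ _
    _ ≤ 1 * (lam Adj * Real.sqrt μ) / μ := by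
        gcongr; exact nrm_nonneg _
    _ = lam Adj / Real.sqrt μ := by
        rw [one_mul, mul_div_assoc, Real.sqrt_div_self', mul_one_div]

/-- edge-sampling lemma for bi-regular bipartite graphs. -/
theorem edge_sampling
    {A B : Type} [Fintype A] [Fintype B]
    (Adj : A → B → Prop) (dA dB : ℕ) (hdA : 0 < dA) (hdB : 0 < dB)
    (hregA : ∀ a : A, (Finset.univ.filter (fun b => Adj a b)).card = dA)
    (hregB : ∀ b : B, (Finset.univ.filter (fun a => Adj a b)).card = dB)
    (B' : Finset B) (hB' : B'.Nonempty)
    (E' : A → B → Prop) (hE' : ∀ a b, E' a b → Adj a b)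
    (μ : ℝ) (hμ : μ = (B'.card : ℝ) / (Fintype.card B : ℝ)) :
    |ex B' (fun b => pr (Finset.univ.filter (fun a => Adj a b)) (fun a => E' a b)) -
      ex (Finset.univ : Finset A) (fun a =>
        pr (Finset.univ.filter (fun b => Adj a b ∧ b ∈ B')) (fun b => E' a b))| ≤
      lam Adj / Real.sqrt μ :=
  edge_sampling_general Adj dA dB hdA hregA hregB B' hB' E' μ hμ
end
end
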